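/- arXiv:1211.7299 — 3 statements merged into one kernel-verified Lean document; each statement's English description precedes it below -/
import Mathlib

section
/- Let V be a representation of the Clifford algebra Cl(W) for a polarization W = W_cre ⊕ W_ann. If V contains a nonzero vector v_vac with W_ann·v_vac = 0, then the linear map from the Fock space Λ(W_cre) to V sending b₁∧b₂∧…∧b_m ↦ b₁b₂⋯b_m·v_vac is a well-defined injective homomorphism of Cl(W)-modules. -/
noncomputable section

variable {W : Type*} [AddCommGroup W] [Module ℂ W]

/-- The Fock-space action of a vector `w ∈ W` on `Λ(W_cre)`: the creation part of `w`
acts by left wedging, the annihilation part by contraction against `B`. -/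
def fockOp (B : W →ₗ[ℂ] W →ₗ[ℂ] ℂ) (Wcre Wann : Submodule ℂ W)
    (hc : IsCompl Wcre Wann) (w : W) :
    ExteriorAlgebra ℂ Wcre →ₗ[ℂ] ExteriorAlgebra ℂ Wcre :=
  LinearMap.mulLeft ℂ
      (ExteriorAlgebra.ι ℂ (Submodule.linearProjOfIsCompl Wcre Wann hc w))
    + CliffordAlgebra.contractLeft (Q := (0 : QuadraticForm ℂ ↥Wcre))
        ((B ((Submodule.linearProjOfIsCompl Wann Wcre hc.symm w : Wann) : W)).comp
          Wcre.subtype)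

/-!
Let `Φ(x) = x · v_vac`, where `Λ(W_cre)` acts on `V` through `ρ` (an algebra action because
`W_cre` is isotropic, so `ρ(b)² = 0`). For `a ∈ W_ann` the anticommutation relations and
`ρ(a) v_vac = 0` give `ρ(a) Φ(x) = Φ(ι_{B(a,·)} x)`, with `ι` the contraction; together with
`Φ(b ∧ x) = ρ(b) Φ(x)` this is the intertwining property. As `B` is nondegenerate and both
halves are isotropic, `a ↦ B(a,·)` maps `W_ann` onto the dual of `W_cre`, so `ker Φ` is stable
under all contractions. Such a subspace is zero as soon as it contains no nonzero scalar: by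
induction on `k`, all contractions of an element `x` of degree `≤ k + 1` vanish, so the number
operator `N = ∑ eᵢ ∧ ι_{eᵢ*}` kills `x`; since `N - (k + 1)` maps degree `≤ k + 1` to degree
`≤ k`, `x` has degree `≤ k`. Finally `Φ(c) = c v_vac ≠ 0` for scalars `c ≠ 0`.
-/

theorem isLinearMap_of_map_smul_add {R M N : Type*} [Semiring R] [AddCommMonoid M] [Module R M]
    [AddCommGroup N] [Module R N] {f : M → N}
    (h : ∀ (c : R) (u v : M), f (c • u + v) = c • f u + f v) : IsLinearMap R f := by
  have h0 : f 0 = 0 := by simpa using h 1 0 0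
  exact ⟨fun u v => by simpa using h 1 u v, fun c u => by simpa [h0] using h c u 0⟩

namespace LinearMap.SeparatingLeft

variable {𝕜 E : Type*} [Field 𝕜] [AddCommGroup E] [Module 𝕜 E] {B : E →ₗ[𝕜] E →ₗ[𝕜] 𝕜}
  {U U' : Submodule 𝕜 E}

theorem injective_compl₁₂_of_isCompl (hB : B.SeparatingLeft) (hc : IsCompl U U')
    (hU' : ∀ u ∈ U', ∀ v ∈ U', B u v = 0) :
    Function.Injective (B.compl₁₂ U'.subtype U.subtype) := by
  rw [← LinearMap.ker_eq_bot, LinearMap.ker_eq_bot']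
  intro a ha
  refine Subtype.ext (hB a fun w => ?_)
  obtain ⟨u, hu, u', hu', rfl⟩ := Submodule.mem_sup.mp (hc.sup_eq_top ▸ Submodule.mem_top :
    w ∈ U ⊔ U')
  rw [map_add, hU' _ a.2 _ hu', add_zero]
  exact LinearMap.congr_fun ha ⟨u, hu⟩

theorem surjective_compl₁₂_of_isCompl [FiniteDimensional 𝕜 E] (hB : B.SeparatingLeft)
    (hc : IsCompl U U') (hU : ∀ u ∈ U, ∀ v ∈ U, B u v = 0)
    (hU' : ∀ u ∈ U', ∀ v ∈ U', B u v = 0) :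
    Function.Surjective (B.compl₁₂ U'.subtype U.subtype) := by
  have hinj := hB.injective_compl₁₂_of_isCompl hc hU'
  have hinj' := hB.injective_compl₁₂_of_isCompl hc.symm hU
  have hdim : Module.finrank 𝕜 U' = Module.finrank 𝕜 (Module.Dual 𝕜 U) := by
    have h := LinearMap.finrank_le_finrank_of_injective hinj
    have h' := LinearMap.finrank_le_finrank_of_injective hinj'
    rw [Subspace.dual_finrank_eq] at h h' ⊢
    exact le_antisymm h h'
  exact (LinearMap.injective_iff_surjective_of_finrank_eq_finrank hdim).mp hinj

end LinearMap.SeparatingLeft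

namespace ExteriorAlgebra

open CliffordAlgebra

section CommRing

variable {R M : Type*} [CommRing R] [AddCommGroup M] [Module R M]

theorem contractLeft_mem_exteriorPower (d : Module.Dual R M) {k : ℕ} {x : ExteriorAlgebra R M}
    (hx : x ∈ ⋀[R]^(k + 1) M) : contractLeft (Q := 0) d x ∈ ⋀[R]^k M := by
  induction k generalizing x with
  | zero =>
    obtain ⟨m, rfl⟩ : x ∈ LinearMap.range (ι R) := by simpa using hx
    rw [contractLeft_ι]
    exact Submodule.algebraMap_mem _
  | succ k ih =>
    rw [exteriorPower, pow_succ'] at hx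
    induction hx using Submodule.mul_induction_on' with
    | mem_mul_mem m hm y hy =>
      obtain ⟨m, rfl⟩ := hm
      rw [contractLeft_ι_mul]
      refine sub_mem (Submodule.smul_mem _ _ hy) ?_
      rw [exteriorPower, pow_succ']
      exact Submodule.mul_mem_mul (LinearMap.mem_range_self _ m) (ih hy)
    | add x y _ _ hx hy => rw [map_add]; exact add_mem hx hy

theorem contractLeft_eq_zero_of_mem_exteriorPower_zero (d : Module.Dual R M)
    {x : ExteriorAlgebra R M} (hx : x ∈ ⋀[R]^0 M) : contractLeft (Q := 0) d x = 0 := by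
  obtain ⟨r, rfl⟩ := Submodule.mem_one.mp hx
  rw [contractLeft_algebraMap]

variable (R M) in
def degreeLE (k : ℕ) : Submodule R (ExteriorAlgebra R M) :=
  ⨆ j ≤ k, ⋀[R]^j M

theorem exteriorPower_le_degreeLE {j k : ℕ} (h : j ≤ k) : ⋀[R]^j M ≤ degreeLE R M k :=
  le_iSup₂_of_le j h le_rfl

theorem degreeLE_zero : degreeLE R M 0 = ⋀[R]^0 M := by
  simp [degreeLE]

theorem degreeLE_succ (k : ℕ) : degreeLE R M (k + 1) = degreeLE R M k ⊔ ⋀[R]^(k + 1) M :=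
  Nat.iSup_le_succ _ k

theorem exists_mem_degreeLE (x : ExteriorAlgebra R M) : ∃ k, x ∈ degreeLE R M k := by
  have hmono : Monotone (degreeLE R M) := fun k l hkl =>
    iSup₂_le fun j hj => exteriorPower_le_degreeLE (hj.trans hkl)
  refine (Submodule.mem_iSup_of_directed _ hmono.directed_le).mp ?_
  have htop : ⨆ k, ⋀[R]^k M = ⊤ := iSup_ι_range_eq_top (0 : QuadraticForm R M)
  exact iSup_mono (fun k => exteriorPower_le_degreeLE le_rfl) (htop ▸ Submodule.mem_top)

theorem contractLeft_mem_degreeLE (d : Module.Dual R M) {k : ℕ} {x : ExteriorAlgebra R M}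
    (hx : x ∈ degreeLE R M (k + 1)) : contractLeft (Q := 0) d x ∈ degreeLE R M k := by
  refine (iSup₂_le fun j hj => ?_ :
    degreeLE R M (k + 1) ≤ (degreeLE R M k).comap (contractLeft (Q := 0) d)) hx
  intro y hy
  rcases j with _ | j
  · simp [Submodule.mem_comap, contractLeft_eq_zero_of_mem_exteriorPower_zero d hy]
  · exact exteriorPower_le_degreeLE (by omega) (contractLeft_mem_exteriorPower d hy)

variable {κ : Type*} [Fintype κ] (e : Module.Basis κ R M)

def numberOp : Module.End R (ExteriorAlgebra R M) :=
  ∑ i, LinearMap.mulLeft R (ι R (e i)) ∘ₗ contractLeft (Q := 0) (e.coord i)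

theorem numberOp_apply (x : ExteriorAlgebra R M) :
    numberOp e x = ∑ i, ι R (e i) * contractLeft (Q := 0) (e.coord i) x := by
  simp [numberOp]

theorem numberOp_ι_mul (m : M) (y : ExteriorAlgebra R M) :
    numberOp e (ι R m * y) = ι R m * y + ι R m * numberOp e y := by
  have hterm (i : κ) : ι R (e i) * contractLeft (Q := 0) (e.coord i) (ι R m * y)
      = e.coord i m • (ι R (e i) * y)
        + ι R m * (ι R (e i) * contractLeft (Q := 0) (e.coord i) y) := by
    rw [contractLeft_ι_mul, mul_sub, mul_smul_comm, ← mul_assoc, ← mul_assoc,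
      eq_neg_of_add_eq_zero_left (ι_add_mul_swap (e i) m), neg_mul, sub_neg_eq_add]
  have hm : ∑ i, e.coord i m • ι R (e i) = ι R m := by
    simp_rw [← map_smul, ← map_sum, Module.Basis.coord_apply, e.sum_repr]
  simp_rw [numberOp_apply, hterm, Finset.sum_add_distrib, ← Finset.mul_sum, ← smul_mul_assoc,
    ← Finset.sum_mul, hm]

theorem numberOp_of_mem_exteriorPower {k : ℕ} {x : ExteriorAlgebra R M} (hx : x ∈ ⋀[R]^k M) :
    numberOp e x = (k : R) • x := by
  induction hx using Submodule.pow_induction_on_left' with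
  | algebraMap r => simp [numberOp_apply, contractLeft_algebraMap]
  | add x y i _ _ hx hy => rw [map_add, hx, hy, smul_add]
  | mem_mul m hm i x _ ih =>
    obtain ⟨m, rfl⟩ := hm
    rw [numberOp_ι_mul, ih, mul_smul_comm, Nat.cast_succ, add_smul, one_smul, add_comm]

theorem numberOp_sub_smul_mem_degreeLE {k : ℕ} {x : ExteriorAlgebra R M}
    (hx : x ∈ degreeLE R M (k + 1)) :
    numberOp e x - ((k + 1 : ℕ) : R) • x ∈ degreeLE R M k := by
  rw [degreeLE_succ] at hx
  obtain ⟨y, hy, z, hz, rfl⟩ := Submodule.mem_sup.mp hx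
  have hNy : numberOp e y ∈ degreeLE R M k := by
    refine (iSup₂_le fun j hj => ?_ :
      degreeLE R M k ≤ (degreeLE R M k).comap (numberOp e)) hy
    intro w hw
    rw [Submodule.mem_comap, numberOp_of_mem_exteriorPower e hw]
    exact Submodule.smul_mem _ _ (exteriorPower_le_degreeLE hj hw)
  rw [map_add, numberOp_of_mem_exteriorPower e hz, smul_add, add_sub_add_right_eq_sub]
  exact sub_mem hNy (Submodule.smul_mem _ _ hy)

end CommRing

section Field

variable {𝕜 M : Type*} [Field 𝕜] [CharZero 𝕜] [AddCommGroup M] [Module 𝕜 M]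
  [FiniteDimensional 𝕜 M]

theorem eq_bot_of_contractLeft_mem {K : Submodule 𝕜 (ExteriorAlgebra 𝕜 M)}
    (hK : ∀ d : Module.Dual 𝕜 M, ∀ x ∈ K, contractLeft (Q := 0) d x ∈ K)
    (hscalar : ∀ c : 𝕜, algebraMap 𝕜 _ c ∈ K → c = 0) : K = ⊥ := by
  let e := Module.finBasis 𝕜 M
  suffices h : ∀ k, ∀ x ∈ K, x ∈ degreeLE 𝕜 M k → x = 0 from
    (Submodule.eq_bot_iff K).mpr fun x hx => (exists_mem_degreeLE x).elim (h · x hx)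
  intro k
  induction k with
  | zero =>
    intro x hxK hx
    rw [degreeLE_zero] at hx
    obtain ⟨c, rfl⟩ := Submodule.mem_one.mp hx
    rw [hscalar c hxK, map_zero]
  | succ k ih =>
    intro x hxK hx
    have hcontract (i) : contractLeft (Q := 0) (e.coord i) x = 0 :=
      ih _ (hK _ x hxK) (contractLeft_mem_degreeLE _ hx)
    have hN : numberOp e x = 0 := by simp [numberOp_apply, hcontract]
    have hlower := numberOp_sub_smul_mem_degreeLE e hx
    rw [hN, zero_sub, neg_mem_iff,
      Submodule.smul_mem_iff _ (Nat.cast_ne_zero.mpr k.succ_ne_zero)] at hlower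
    exact ih x hxK hlower

end Field

section Representation

variable {R M V : Type*} [CommRing R] [AddCommGroup M] [Module R M] [AddCommGroup V]
  [Module R V]
  (f : M →ₗ[R] Module.End R V) (hf : ∀ m, f m * f m = 0) (v : V)

def liftApply : ExteriorAlgebra R M →ₗ[R] V :=
  LinearMap.applyₗ v ∘ₗ (lift R ⟨f, hf⟩).toLinearMap

theorem liftApply_algebraMap (r : R) : liftApply f hf v (algebraMap R _ r) = r • v := by
  simp [liftApply, Algebra.algebraMap_eq_smul_one]

theorem liftApply_one : liftApply f hf v 1 = v := by
  simp [liftApply]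

theorem liftApply_ι_mul (m : M) (x : ExteriorAlgebra R M) :
    liftApply f hf v (ι R m * x) = f m (liftApply f hf v x) := by
  simp [liftApply]

theorem liftApply_contractLeft (d : Module.Dual R M) {a : Module.End R V}
    (ha : ∀ m, a * f m + f m * a = d m • 1) (hv : a v = 0) (x : ExteriorAlgebra R M) :
    liftApply f hf v (contractLeft (Q := 0) d x) = a (liftApply f hf v x) := by
  induction x using CliffordAlgebra.left_induction with
  | algebraMap r =>
    rw [contractLeft_algebraMap, map_zero, liftApply_algebraMap, map_smul, hv, smul_zero]
  | add x y hx hy => rw [map_add, map_add, hx, hy, map_add, map_add]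
  | ι_mul x m hx =>
    have hanti := LinearMap.congr_fun (ha m) (liftApply f hf v x)
    simp only [LinearMap.add_apply, Module.End.mul_apply, LinearMap.smul_apply,
      Module.End.one_apply] at hanti
    rw [contractLeft_ι_mul, map_sub, map_smul, liftApply_ι_mul, hx, liftApply_ι_mul ..]
    exact (eq_sub_of_add_eq hanti).symm

end Representation

theorem liftApply_injective {𝕜 M V : Type*} [Field 𝕜] [CharZero 𝕜] [AddCommGroup M]
    [Module 𝕜 M] [FiniteDimensional 𝕜 M] [AddCommGroup V] [Module 𝕜 V]
    (f : M →ₗ[𝕜] Module.End 𝕜 V) (hf : ∀ m, f m * f m = 0) {v : V} (hv : v ≠ 0)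
    (hann : ∀ d : Module.Dual 𝕜 M,
      ∃ a : Module.End 𝕜 V, (∀ m, a * f m + f m * a = d m • 1) ∧ a v = 0) :
    Function.Injective (liftApply f hf v) := by
  rw [← LinearMap.ker_eq_bot]
  refine eq_bot_of_contractLeft_mem (fun d x hx => ?_) (fun c hc => ?_)
  · obtain ⟨a, ha, hav⟩ := hann d
    rw [LinearMap.mem_ker, liftApply_contractLeft f hf v d ha hav, LinearMap.mem_ker.mp hx,
      map_zero]
  · rw [LinearMap.mem_ker, liftApply_algebraMap] at hc
    exact (smul_eq_zero.mp hc).resolve_right hv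

end ExteriorAlgebra

open ExteriorAlgebra in
theorem fock_embeds_in_module_with_vacuum_general
    [FiniteDimensional ℂ W]
    (B : W →ₗ[ℂ] W →ₗ[ℂ] ℂ)
    (hnondeg : ∀ u : W, (∀ v : W, B u v = 0) → u = 0)
    (Wcre Wann : Submodule ℂ W) (hc : IsCompl Wcre Wann)
    (hcre : ∀ u ∈ Wcre, ∀ v ∈ Wcre, B u v = 0)
    (hann : ∀ u ∈ Wann, ∀ v ∈ Wann, B u v = 0)
    {V : Type*} [AddCommGroup V] [Module ℂ V]
    (ρ : W → (V →ₗ[ℂ] V))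
    (hρlin : ∀ (c : ℂ) (u v : W), ρ (c • u + v) = c • ρ u + ρ v)
    (hρ : ∀ u v : W, ρ u ∘ₗ ρ v + ρ v ∘ₗ ρ u = B u v • LinearMap.id)
    (vvac : V) (hvac_ne : vvac ≠ 0)
    (hvac : ∀ a : W, a ∈ Wann → ρ a vvac = 0) :
    ∃ Φ : ExteriorAlgebra ℂ Wcre →ₗ[ℂ] V,
      Φ 1 = vvac ∧
      (∀ (b : Wcre) (x : ExteriorAlgebra ℂ Wcre),
        Φ (ExteriorAlgebra.ι ℂ b * x) = ρ (b : W) (Φ x)) ∧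
      Function.Injective Φ ∧
      (∀ (w : W) (x : ExteriorAlgebra ℂ Wcre),
        Φ (fockOp B Wcre Wann hc w x) = ρ w (Φ x)) := by
  have hρlinear := isLinearMap_of_map_smul_add hρlin
  let f := IsLinearMap.mk' ρ hρlinear ∘ₗ Wcre.subtype
  have hf (b : Wcre) : f b * f b = 0 := by
    have h : (2 : ℂ) • (f b * f b) = 0 := by
      have hb := hρ b b
      rw [hcre _ b.2 _ b.2, zero_smul] at hb
      rw [two_smul]
      exact hb
    exact (smul_eq_zero.mp h).resolve_left two_ne_zero
  have hannihilate (a : W) (ha : a ∈ Wann) (x : ExteriorAlgebra ℂ Wcre) :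
      liftApply f hf vvac (CliffordAlgebra.contractLeft (Q := 0) ((B a).comp Wcre.subtype) x)
        = ρ a (liftApply f hf vvac x) :=
    liftApply_contractLeft f hf vvac _ (fun b => hρ a b) (hvac a ha) x
  refine ⟨liftApply f hf vvac, liftApply_one f hf vvac, liftApply_ι_mul f hf vvac,
    liftApply_injective f hf hvac_ne fun d => ?_, fun w x => ?_⟩
  · obtain ⟨a, rfl⟩ :=
      LinearMap.SeparatingLeft.surjective_compl₁₂_of_isCompl hnondeg hc hcre hann d
    exact ⟨ρ a, fun b => hρ a b, hvac a a.2⟩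
  · rw [fockOp, LinearMap.add_apply, map_add, LinearMap.mulLeft_apply, liftApply_ι_mul,
      hannihilate _ (Submodule.coe_mem _), ← LinearMap.add_apply]
    change (ρ _ + ρ _) _ = _
    rw [← hρlinear.map_add]
    exact congrArg (ρ · _) (Submodule.projection_add_projection_eq_self hc w)

/-- A representation of the Clifford relations containing a nonzero vector annihilated by
`W_ann` contains an embedded copy of the Fock representation, via
`b₁∧…∧b_m ↦ b₁⋯b_m·v_vac`. -/
theorem fock_embeds_in_module_with_vacuum
    [FiniteDimensional ℂ W]
    (B : W →ₗ[ℂ] W →ₗ[ℂ] ℂ)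
    (hsymm : ∀ u v : W, B u v = B v u)
    (hnondeg : ∀ u : W, (∀ v : W, B u v = 0) → u = 0)
    (Wcre Wann : Submodule ℂ W) (hc : IsCompl Wcre Wann)
    (hcre : ∀ u ∈ Wcre, ∀ v ∈ Wcre, B u v = 0)
    (hann : ∀ u ∈ Wann, ∀ v ∈ Wann, B u v = 0)
    {V : Type*} [AddCommGroup V] [Module ℂ V]
    (ρ : W → (V →ₗ[ℂ] V))
    (hρlin : ∀ (c : ℂ) (u v : W), ρ (c • u + v) = c • ρ u + ρ v)
    (hρ : ∀ u v : W, ρ u ∘ₗ ρ v + ρ v ∘ₗ ρ u = B u v • LinearMap.id)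
    (vvac : V) (hvac_ne : vvac ≠ 0)
    (hvac : ∀ a : W, a ∈ Wann → ρ a vvac = 0) :
    ∃ Φ : ExteriorAlgebra ℂ Wcre →ₗ[ℂ] V,
      Φ 1 = vvac ∧
      (∀ (b : Wcre) (x : ExteriorAlgebra ℂ Wcre),
        Φ (ExteriorAlgebra.ι ℂ b * x) = ρ (b : W) (Φ x)) ∧
      Function.Injective Φ ∧
      (∀ (w : W) (x : ExteriorAlgebra ℂ Wcre),
        Φ (fockOp B Wcre Wann hc w x) = ρ w (Φ x)) :=
  fock_embeds_in_module_with_vacuum_general B hnondeg Wcre Wann hc hcre hann ρ hρlin hρ vvac hvac_ne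
    hvac

end
end

section
/- Fermionic Wick formula: Let W = W_cre ⊕ W_ann be a polarization, Λ(W_cre) the Fock representation of Cl(W), v_vac = 1 the vacuum and v*_vac the dual vacuum (the linear functional vanishing on Λ^m(W_cre) for m ≥ 1 and equal to 1 on the vacuum). Then for any φ₁, …, φ_n ∈ W, ⟨v*_vac, φ₁⋯φ_n·v_vac⟩ = Pf([⟨v*_vac, φ_i φ_j·v_vac⟩]_{i,j=1}^n), where the n×n matrix with entries A_{ij} = ⟨v*_vac, φ_i φ_j v_vac⟩ for i < j, A_{ji} = −A_{ij}, A_{ii} = 0 is antisymmetric and Pf denotes its Pfaffian (zero when n is odd). -/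
/-! Both sides satisfy the same recursion in `n`. The vacuum functional kills the image of every
creation operator, so in `⟨φ₁ φ₂ ⋯ φₙ⟩` only the annihilation part of `φ₁` contributes; it acts as
an odd derivation of the exterior algebra that kills the vacuum, and moving it to the right gives
`Σ_q (-1)^q ⟨φ₁ φ_q⟩ ⟨φ₂ ⋯ φ̂_q ⋯ φₙ⟩`. The Pfaffian obeys the same expansion along its first row:
each summand of the defining sum is invariant under permuting the pairs and flipping a pair, a
group acting transitively on positions, so one may restrict to permutations fixing `0` at the cost
of the factor `n`; the partner of `0` then gives the row entry and the remaining pairs a Pfaffian of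
the minor. -/

noncomputable section

open scoped BigOperators

/-- The Pfaffian of an `n × n` complex matrix: zero if `n` is odd, and for `n = 2m` given
by `(1/(2^m m!)) Σ_{π ∈ S_{2m}} sgn(π) ∏_{s=1}^m A_{π(2s−1),π(2s)}`. -/
def pf {n : ℕ} (A : Matrix (Fin n) (Fin n) ℂ) : ℂ :=
  if h : Even n then
    ((2 ^ (n / 2) * (Nat.factorial (n / 2)) : ℂ))⁻¹ *
      ∑ π : Equiv.Perm (Fin n), (Equiv.Perm.sign π : ℤ) *
        ∏ s : Fin (n / 2),
          A (π ⟨2 * (s : ℕ), by have := Nat.even_iff.mp h; omega⟩)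
            (π ⟨2 * (s : ℕ) + 1, by have := Nat.even_iff.mp h; omega⟩)
  else 0

variable {W : Type*} [AddCommGroup W] [Module ℂ W]

open Equiv Finset

section Pfaffian

variable {R : Type*} [CommRing R] {n : ℕ}

def pairFst (n : ℕ) (s : Fin (n / 2)) : Fin n := ⟨2 * s, by have := s.isLt; omega⟩

def pairSnd (n : ℕ) (s : Fin (n / 2)) : Fin n := ⟨2 * s + 1, by have := s.isLt; omega⟩

@[simp] theorem val_pairFst (s : Fin (n / 2)) : (pairFst n s : ℕ) = 2 * s := rfl

@[simp] theorem val_pairSnd (s : Fin (n / 2)) : (pairSnd n s : ℕ) = 2 * s + 1 := rfl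

theorem pairFst_injective : Function.Injective (pairFst n) := fun s t h => by
  ext; have := congrArg Fin.val h; simp only [val_pairFst] at this; omega

theorem pairSnd_injective : Function.Injective (pairSnd n) := fun s t h => by
  ext; have := congrArg Fin.val h; simp only [val_pairSnd] at this; omega

theorem pairFst_ne_pairSnd (s t : Fin (n / 2)) : pairFst n s ≠ pairSnd n t :=
  Fin.ne_of_val_ne (by simp only [val_pairFst, val_pairSnd]; omega)

def pfTerm (A : Matrix (Fin n) (Fin n) R) (π : Perm (Fin n)) : R :=
  (Perm.sign π : ℤ) * ∏ s, A (π (pairFst n s)) (π (pairSnd n s))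

theorem pf_eq_sum_pfTerm (h : Even n) (A : Matrix (Fin n) (Fin n) ℂ) :
    pf A = (2 ^ (n / 2) * (n / 2).factorial : ℂ)⁻¹ * ∑ π, pfTerm A π := by
  rw [pf, dif_pos h]; rfl

theorem pf_of_not_even (h : ¬ Even n) (A : Matrix (Fin n) (Fin n) ℂ) : pf A = 0 := by
  rw [pf, dif_neg h]

theorem pfTerm_mul_swap_pair {A : Matrix (Fin n) (Fin n) R} (hA : ∀ i j, A j i = -A i j)
    (π : Perm (Fin n)) (s : Fin (n / 2)) :
    pfTerm A (π * swap (pairFst n s) (pairSnd n s)) = pfTerm A π := by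
  have hrest : ∀ t ∈ ({s}ᶜ : Finset _),
      A ((π * swap (pairFst n s) (pairSnd n s)) (pairFst n t))
        ((π * swap (pairFst n s) (pairSnd n s)) (pairSnd n t))
      = A (π (pairFst n t)) (π (pairSnd n t)) := by
    intro t ht
    have hts : t ≠ s := by simpa using ht
    rw [Perm.mul_apply, Perm.mul_apply,
      swap_apply_of_ne_of_ne (pairFst_injective.ne hts) (pairFst_ne_pairSnd t s),
      swap_apply_of_ne_of_ne (pairFst_ne_pairSnd s t).symm (pairSnd_injective.ne hts)]
  unfold pfTerm
  rw [Fintype.prod_eq_mul_prod_compl s, Fintype.prod_eq_mul_prod_compl s, prod_congr rfl hrest,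
    Perm.mul_apply, Perm.mul_apply, swap_apply_left, swap_apply_right, hA, Perm.sign_mul,
    Perm.sign_swap (pairFst_ne_pairSnd s s)]
  push_cast
  ring

theorem pfTerm_mul_swap_pairs (A : Matrix (Fin n) (Fin n) R) (π : Perm (Fin n))
    (s t : Fin (n / 2)) :
    pfTerm A (π * (swap (pairFst n s) (pairFst n t) * swap (pairSnd n s) (pairSnd n t)))
      = pfTerm A π := by
  set τ := swap (pairFst n s) (pairFst n t) * swap (pairSnd n s) (pairSnd n t)
  have hfst : ∀ u, τ (pairFst n u) = pairFst n (swap s t u) := fun u => by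
    rw [Perm.mul_apply, swap_apply_of_ne_of_ne (pairFst_ne_pairSnd u s) (pairFst_ne_pairSnd u t),
      pairFst_injective.swap_apply]
  have hsnd : ∀ u, τ (pairSnd n u) = pairSnd n (swap s t u) := fun u => by
    rw [Perm.mul_apply, pairSnd_injective.swap_apply,
      swap_apply_of_ne_of_ne (pairFst_ne_pairSnd s _).symm (pairFst_ne_pairSnd t _).symm]
  have hsign : Perm.sign τ = 1 := by
    rcases eq_or_ne s t with rfl | hst
    · simp [τ]
    · rw [Perm.sign_mul, Perm.sign_swap (pairFst_injective.ne hst),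
        Perm.sign_swap (pairSnd_injective.ne hst)]
      rfl
  unfold pfTerm
  simp only [Perm.sign_mul, hsign, mul_one, Perm.mul_apply, hfst, hsnd]
  congr 1
  exact Fintype.prod_equiv (swap s t) _ _ (fun _ => rfl)

theorem exists_apply_eq_zero_forall_pfTerm_mul_eq {N : ℕ}
    {A : Matrix (Fin (N + 2)) (Fin (N + 2)) R} (hA : ∀ i j, A j i = -A i j) (hN : Even N)
    (k : Fin (N + 2)) :
    ∃ τ : Perm (Fin (N + 2)), τ k = 0 ∧ ∀ π, pfTerm A (π * τ) = pfTerm A π := by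
  obtain ⟨r, hr⟩ := hN
  -- `τ` carries the pair containing `k` onto the first pair; for odd `k` the pair is then flipped.
  let s₀ : Fin ((N + 2) / 2) := ⟨0, by omega⟩
  let t : Fin ((N + 2) / 2) := ⟨k / 2, by omega⟩
  let τ := swap (pairFst _ s₀) (pairFst _ t) * swap (pairSnd _ s₀) (pairSnd _ t)
  have hτ : ∀ π, pfTerm A (π * τ) = pfTerm A π := fun π => pfTerm_mul_swap_pairs A π s₀ t
  rcases Nat.even_or_odd k with hk | hk
  · have hkt : k = pairFst _ t := by ext; simp [t]; grind
    refine ⟨τ, ?_, hτ⟩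
    rw [hkt, Perm.mul_apply, swap_apply_of_ne_of_ne (pairFst_ne_pairSnd t s₀)
      (pairFst_ne_pairSnd t t), swap_apply_right]
    rfl
  · have hkt : k = pairSnd _ t := by ext; simp [t]; grind
    refine ⟨swap (pairFst _ s₀) (pairSnd _ s₀) * τ, ?_, fun π => ?_⟩
    · rw [hkt, Perm.mul_apply, Perm.mul_apply, swap_apply_right,
        swap_apply_of_ne_of_ne (pairFst_ne_pairSnd s₀ s₀).symm (pairFst_ne_pairSnd t s₀).symm,
        swap_apply_right]
      rfl
    · rw [← mul_assoc, hτ, pfTerm_mul_swap_pair hA]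

theorem sum_perm_eq_card_nsmul_sum_filter_apply_eq {α M : Type*} [Fintype α] [DecidableEq α]
    [AddCommMonoid M] (f : Perm α → M) (a : α)
    (h : ∀ k, ∃ τ : Perm α, τ k = a ∧ ∀ π, f (π * τ) = f π) :
    ∑ π, f π = Fintype.card α • ∑ π with π a = a, f π := by
  rw [← sum_fiberwise univ (fun π : Perm α => π⁻¹ a), ← card_univ, ← sum_const]
  refine sum_congr rfl fun k _ => ?_
  obtain ⟨τ, hτk, hτ⟩ := h k
  have hτ' : τ⁻¹ a = k := by rw [← hτk]; exact τ.symm_apply_apply k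
  refine sum_nbij' (· * τ⁻¹) (· * τ) (fun π hπ => ?_) (fun π hπ => ?_) (fun π _ => by simp)
    (fun π _ => by simp) (fun π _ => by simpa using hτ (π * τ⁻¹))
  · simp only [mem_filter, mem_univ, true_and, Perm.inv_eq_iff_eq] at hπ ⊢
    rw [Perm.mul_apply, hτ', ← hπ]
  · simp only [mem_filter, mem_univ, true_and, Perm.inv_eq_iff_eq] at hπ ⊢
    rw [Perm.mul_apply, hτk, hπ]

theorem sum_filter_apply_zero_eq_sum_decomposeFin {M : Type*} [AddCommMonoid M]
    (f : Perm (Fin (n + 1)) → M) :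
    ∑ π with π 0 = 0, f π = ∑ σ : Perm (Fin n), f (Perm.decomposeFin.symm (0, σ)) := by
  have hfst : ∀ π : Perm (Fin (n + 1)), (Perm.decomposeFin π).1 = π 0 := fun π => by
    conv_rhs => rw [← Perm.decomposeFin.symm_apply_apply π]
    rw [Perm.decomposeFin_symm_apply_zero]
  have hsymm : ∀ π ∈ ({π | π 0 = 0} : Finset (Perm (Fin (n + 1)))),
      Perm.decomposeFin.symm (0, (Perm.decomposeFin π).2) = π := fun π hπ => by
    have h0 : π 0 = 0 := by simpa using hπ
    rw [← h0, ← hfst, Prod.mk.eta, Equiv.symm_apply_apply]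
  refine sum_nbij' (fun π => (Perm.decomposeFin π).2) (fun σ => Perm.decomposeFin.symm (0, σ))
    (fun _ _ => mem_univ _) (fun σ _ => by simp [Perm.decomposeFin_symm_apply_zero])
    hsymm (fun σ _ => by simp) (fun π hπ => by rw [hsymm π hπ])

theorem prod_pairs_add_two {N : ℕ} (A : Matrix (Fin (N + 2)) (Fin (N + 2)) R)
    (π : Perm (Fin (N + 2))) :
    ∏ s, A (π (pairFst (N + 2) s)) (π (pairSnd (N + 2) s))
      = A (π 0) (π 1) * ∏ s, A (π (pairFst N s).succ.succ) (π (pairSnd N s).succ.succ) := by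
  have h : (N + 2) / 2 = N / 2 + 1 := by omega
  rw [← Fintype.prod_equiv (finCongr h.symm) _ _ (fun _ => rfl), Fin.prod_univ_succ]
  rfl

theorem pfTerm_decomposeFin_decomposeFin {N : ℕ} (A : Matrix (Fin (N + 2)) (Fin (N + 2)) R)
    (q : Fin (N + 1)) (σ : Perm (Fin N)) :
    pfTerm A (Perm.decomposeFin.symm (0, Perm.decomposeFin.symm (q, σ)))
      = (if q = 0 then 1 else -1) * A 0 q.succ
        * pfTerm (A.submatrix (fun t => (swap 0 q t.succ).succ) (fun t => (swap 0 q t.succ).succ))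
            σ := by
  unfold pfTerm
  rw [prod_pairs_add_two]
  simp only [Perm.decomposeFin.symm_sign, Perm.decomposeFin_symm_apply_zero,
    Perm.decomposeFin_symm_apply_one, Perm.decomposeFin_symm_apply_succ, swap_self, refl_apply,
    Matrix.submatrix_apply, if_true, one_mul]
  split_ifs <;> push_cast <;> ring

theorem sum_pfTerm_submatrix_perm (A : Matrix (Fin n) (Fin n) R) (τ : Perm (Fin n)) :
    ∑ σ, pfTerm (A.submatrix τ τ) σ = (Perm.sign τ : ℤ) * ∑ σ, pfTerm A σ := by
  have hsign : ∀ σ : Perm (Fin n),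
      ((Perm.sign σ : ℤ) : R) = (Perm.sign τ : ℤ) * (Perm.sign (τ * σ) : ℤ) := fun σ => by
    rw [Perm.sign_mul, Units.val_mul, Int.cast_mul, ← mul_assoc, ← Int.cast_mul,
      ← Units.val_mul, Int.units_mul_self, Units.val_one, Int.cast_one, one_mul]
  calc ∑ σ, pfTerm (A.submatrix τ τ) σ = ∑ σ, (Perm.sign τ : ℤ) * pfTerm A (τ * σ) := by
        refine sum_congr rfl fun σ _ => ?_
        simp only [pfTerm, Matrix.submatrix_apply, Perm.mul_apply]
        rw [hsign σ, mul_assoc]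
    _ = (Perm.sign τ : ℤ) * ∑ σ, pfTerm A σ := by
        rw [mul_sum]; exact Fintype.sum_equiv (Equiv.mulLeft τ) _ _ (fun _ => rfl)

theorem sum_pfTerm_decomposeFin_decomposeFin {N : ℕ} (A : Matrix (Fin (N + 2)) (Fin (N + 2)) R)
    (q : Fin (N + 1)) :
    ∑ σ : Perm (Fin N), pfTerm A (Perm.decomposeFin.symm (0, Perm.decomposeFin.symm (q, σ)))
      = (-1) ^ (q : ℕ) * A 0 q.succ
        * ∑ σ, pfTerm (A.submatrix (fun t => (q.succAbove t).succ) (fun t => (q.succAbove t).succ))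
            σ := by
  simp only [pfTerm_decomposeFin_decomposeFin, ← mul_sum]
  cases q using Fin.cases with
  | zero => simp
  | succ i =>
    -- `decomposeFin` enumerates the minor out of order; `cycleRange` sorts it, with sign `(-1)^i`.
    have he : (fun t => (swap 0 i.succ t.succ).succ)
        = (fun t => (i.succ.succAbove t).succ) ∘ i.cycleRange := by
      ext t; simp
    rw [he, ← Matrix.submatrix_submatrix, sum_pfTerm_submatrix_perm, Fin.sign_cycleRange,
      if_neg (Fin.succ_ne_zero i), Fin.val_succ, pow_succ]
    push_cast
    ring

theorem two_pow_mul_factorial_half_add_two {N : ℕ} (hN : Even N) :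
    (2 ^ ((N + 2) / 2) * ((N + 2) / 2).factorial : ℂ)
      = (N + 2) * (2 ^ (N / 2) * (N / 2).factorial) := by
  obtain ⟨r, rfl⟩ := hN
  rw [show (r + r + 2) / 2 = r + 1 by omega, show (r + r) / 2 = r by omega, Nat.factorial_succ]
  push_cast
  ring

theorem pf_eq_sum_mul_pf_submatrix {N : ℕ} {A : Matrix (Fin (N + 2)) (Fin (N + 2)) ℂ}
    (hA : ∀ i j, A j i = -A i j) :
    pf A = ∑ q : Fin (N + 1), (-1) ^ (q : ℕ) * A 0 q.succ
      * pf (A.submatrix (fun t => (q.succAbove t).succ) (fun t => (q.succAbove t).succ)) := by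
  by_cases hN : Even N
  · have hN2 : Even (N + 2) := hN.add even_two
    rw [pf_eq_sum_pfTerm hN2, sum_perm_eq_card_nsmul_sum_filter_apply_eq _ 0
        (exists_apply_eq_zero_forall_pfTerm_mul_eq hA hN),
      sum_filter_apply_zero_eq_sum_decomposeFin,
      ← Fintype.sum_equiv Perm.decomposeFin.symm _
        (fun π => pfTerm A (Perm.decomposeFin.symm (0, π))) (fun _ => rfl),
      Fintype.sum_prod_type, Fintype.card_fin, nsmul_eq_mul, mul_sum, mul_sum]
    refine sum_congr rfl fun q _ => ?_
    rw [sum_pfTerm_decomposeFin_decomposeFin, pf_eq_sum_pfTerm hN,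
      two_pow_mul_factorial_half_add_two hN]
    have : (N + 2 : ℂ) ≠ 0 := by exact_mod_cast Nat.succ_ne_zero (N + 1)
    push_cast
    field_simp
  · have hN2 : ¬ Even (N + 2) := by simpa [parity_simps] using hN
    simp only [pf_of_not_even hN2, pf_of_not_even hN, mul_zero, sum_const_zero]

theorem pf_fin_zero (A : Matrix (Fin 0) (Fin 0) ℂ) : pf A = 1 := by
  simp [pf_eq_sum_pfTerm Even.zero, pfTerm]

def skewMatrix (g : Fin n → Fin n → R) : Matrix (Fin n) (Fin n) R :=
  Matrix.of fun i j => if i < j then g i j else if j < i then -g j i else 0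

theorem skewMatrix_apply_swap (g : Fin n → Fin n → R) (i j : Fin n) :
    skewMatrix g j i = -skewMatrix g i j := by
  rcases lt_trichotomy i j with h | rfl | h
  · simp [skewMatrix, h, h.not_gt]
  · simp [skewMatrix]
  · simp [skewMatrix, h, h.not_gt]

theorem skewMatrix_submatrix {m : ℕ} (g : Fin n → Fin n → R) {e : Fin m → Fin n}
    (he : StrictMono e) :
    (skewMatrix g).submatrix e e = skewMatrix fun i j => g (e i) (e j) := by
  ext i j
  simp only [skewMatrix, Matrix.submatrix_apply, Matrix.of_apply, he.lt_iff_lt]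

theorem eq_pf_skewMatrix_of_recursion {α : Type*} (g : α → α → ℂ)
    (V : (n : ℕ) → (Fin n → α) → ℂ) (h0 : ∀ φ, V 0 φ = 1) (h1 : ∀ φ, V 1 φ = 0)
    (hrec : ∀ N (φ : Fin (N + 2) → α), V (N + 2) φ
      = ∑ q : Fin (N + 1), (-1) ^ (q : ℕ) * g (φ 0) (φ q.succ)
          * V N (fun t => φ (q.succAbove t).succ))
    (n : ℕ) (φ : Fin n → α) : V n φ = pf (skewMatrix fun i j => g (φ i) (φ j)) := by
  induction n using Nat.twoStepInduction with
  | zero => rw [h0, pf_fin_zero]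
  | one => rw [h1, pf_of_not_even Nat.not_even_one]
  | more N ih _ =>
    rw [hrec, pf_eq_sum_mul_pf_submatrix (skewMatrix_apply_swap _)]
    refine sum_congr rfl fun q _ => ?_
    rw [ih, skewMatrix_submatrix (e := fun t => (q.succAbove t).succ) _
      (Fin.strictMono_succ.comp (Fin.strictMono_succAbove q))]
    simp [skewMatrix, Fin.succ_pos]

end Pfaffian

theorem ExteriorAlgebra.algebraMapInv_ι_mul {R M : Type*} [CommRing R] [AddCommGroup M]
    [Module R M] (m : M) (x : ExteriorAlgebra R M) :
    algebraMapInv (ι R m * x) = 0 := by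
  simp [algebraMapInv]

section Fock

variable (B : W →ₗ[ℂ] W →ₗ[ℂ] ℂ) (Wcre Wann : Submodule ℂ W) (hc : IsCompl Wcre Wann)

local notation "Λ" => ExteriorAlgebra ℂ Wcre
local notation "ε" => ExteriorAlgebra.algebraMapInv (R := ℂ) (M := Wcre)
local notation "T" => fockOp B Wcre Wann hc

def annihilationDual (w : W) : Module.Dual ℂ Wcre :=
  (B (Submodule.projectionOnto Wann Wcre hc.symm w : W)).comp Wcre.subtype

def fockPairing (u v : W) : ℂ :=
  annihilationDual B Wcre Wann hc u (Submodule.projectionOnto Wcre Wann hc v)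

def vacuumExpectation {n : ℕ} (φ : Fin n → W) : ℂ :=
  ε ((List.ofFn fun i => T (φ i)).prod 1)

theorem fockOp_apply (w : W) (x : Λ) :
    T w x = ExteriorAlgebra.ι ℂ (Submodule.projectionOnto Wcre Wann hc w) * x
      + CliffordAlgebra.contractLeft (annihilationDual B Wcre Wann hc w) x :=
  rfl

theorem contractLeft_fockOp (u v : W) (x : Λ) :
    CliffordAlgebra.contractLeft (annihilationDual B Wcre Wann hc u) (T v x)
      = fockPairing B Wcre Wann hc u v • x
        - T v (CliffordAlgebra.contractLeft (annihilationDual B Wcre Wann hc u) x) := by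
  rw [fockOp_apply, map_add, CliffordAlgebra.contractLeft_ι_mul,
    CliffordAlgebra.contractLeft_comm, fockOp_apply, fockPairing]
  abel

theorem contractLeft_prod_fockOp_one {m : ℕ} (u : W) (φ : Fin (m + 1) → W) :
    CliffordAlgebra.contractLeft (annihilationDual B Wcre Wann hc u)
        ((List.ofFn fun i => T (φ i)).prod 1)
      = ∑ j : Fin (m + 1), ((-1) ^ (j : ℕ) * fockPairing B Wcre Wann hc u (φ j))
          • (List.ofFn fun t => T (φ (j.succAbove t))).prod 1 := by
  induction m with
  | zero => simp [contractLeft_fockOp]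
  | succ m ih =>
    rw [List.ofFn_succ, List.prod_cons, Module.End.mul_apply, contractLeft_fockOp,
      ih fun i => φ i.succ, Fin.sum_univ_succ (n := m + 1)]
    simp only [Fin.succAbove_zero, Fin.val_zero, pow_zero, one_mul, List.ofFn_succ,
      Fin.succ_succAbove_zero, Fin.succ_succAbove_succ, List.prod_cons, Module.End.mul_apply,
      map_sum, map_smul, Fin.val_succ, pow_succ, sub_eq_add_neg, ← sum_neg_distrib]
    congr 1
    refine sum_congr rfl fun j _ => ?_
    module

theorem algebraMapInv_fockOp (w : W) (x : Λ) :
    ε (T w x) = ε (CliffordAlgebra.contractLeft (annihilationDual B Wcre Wann hc w) x) := by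
  rw [fockOp_apply, map_add, ExteriorAlgebra.algebraMapInv_ι_mul, zero_add]

theorem algebraMapInv_fockOp_fockOp_one (u v : W) :
    ε (T u (T v 1)) = fockPairing B Wcre Wann hc u v := by
  rw [algebraMapInv_fockOp, contractLeft_fockOp, CliffordAlgebra.contractLeft_one, map_zero,
    sub_zero, map_smul, map_one, smul_eq_mul, mul_one]

theorem vacuumExpectation_fin_zero (φ : Fin 0 → W) : vacuumExpectation B Wcre Wann hc φ = 1 := by
  simp [vacuumExpectation]

theorem vacuumExpectation_fin_one (φ : Fin 1 → W) : vacuumExpectation B Wcre Wann hc φ = 0 := by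
  simp [vacuumExpectation, algebraMapInv_fockOp]

theorem vacuumExpectation_add_two {N : ℕ} (φ : Fin (N + 2) → W) :
    vacuumExpectation B Wcre Wann hc φ
      = ∑ q : Fin (N + 1), (-1) ^ (q : ℕ) * fockPairing B Wcre Wann hc (φ 0) (φ q.succ)
          * vacuumExpectation B Wcre Wann hc (fun t => φ (q.succAbove t).succ) := by
  rw [vacuumExpectation, List.ofFn_succ, List.prod_cons, Module.End.mul_apply,
    algebraMapInv_fockOp, contractLeft_prod_fockOp_one, map_sum]
  simp only [map_smul, smul_eq_mul, vacuumExpectation]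

end Fock

theorem fermionic_wick_formula_general
    (B : W →ₗ[ℂ] W →ₗ[ℂ] ℂ)
    (Wcre Wann : Submodule ℂ W) (hc : IsCompl Wcre Wann)
    (n : ℕ) (φ : Fin n → W) :
    ExteriorAlgebra.algebraMapInv
        (((List.ofFn fun i => fockOp B Wcre Wann hc (φ i)).prod) 1)
      = pf (Matrix.of fun i j : Fin n =>
          if i < j then
            ExteriorAlgebra.algebraMapInv
              (fockOp B Wcre Wann hc (φ i) (fockOp B Wcre Wann hc (φ j) 1))
          else if j < i then
            - ExteriorAlgebra.algebraMapInv
              (fockOp B Wcre Wann hc (φ j) (fockOp B Wcre Wann hc (φ i) 1))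
          else 0) := by
  simp_rw [algebraMapInv_fockOp_fockOp_one]
  exact eq_pf_skewMatrix_of_recursion (fockPairing B Wcre Wann hc)
    (fun _ => vacuumExpectation B Wcre Wann hc) (vacuumExpectation_fin_zero B Wcre Wann hc)
    (vacuumExpectation_fin_one B Wcre Wann hc) (fun _ => vacuumExpectation_add_two B Wcre Wann hc)
    n φ

/-- Fermionic Wick formula: the vacuum expectation value of a product `φ₁⋯φ_n` of Clifford
generators in the Fock representation equals the Pfaffian of the antisymmetric matrix of
two-point vacuum expectation values. -/
theorem fermionic_wick_formula
    [FiniteDimensional ℂ W]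
    (B : W →ₗ[ℂ] W →ₗ[ℂ] ℂ)
    (hsymm : ∀ u v : W, B u v = B v u)
    (hnondeg : ∀ u : W, (∀ v : W, B u v = 0) → u = 0)
    (Wcre Wann : Submodule ℂ W) (hc : IsCompl Wcre Wann)
    (hcre : ∀ u ∈ Wcre, ∀ v ∈ Wcre, B u v = 0)
    (hann : ∀ u ∈ Wann, ∀ v ∈ Wann, B u v = 0)
    (n : ℕ) (φ : Fin n → W) :
    ExteriorAlgebra.algebraMapInv
        (((List.ofFn fun i => fockOp B Wcre Wann hc (φ i)).prod) 1)
      = pf (Matrix.of fun i j : Fin n =>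
          if i < j then
            ExteriorAlgebra.algebraMapInv
              (fockOp B Wcre Wann hc (φ i) (fockOp B Wcre Wann hc (φ j) 1))
          else if j < i then
            - ExteriorAlgebra.algebraMapInv
              (fockOp B Wcre Wann hc (φ j) (fockOp B Wcre Wann hc (φ i) 1))
          else 0) :=
  fermionic_wick_formula_general B Wcre Wann hc n φ

end
end

section
/- Let h : {x_L, x_L+1, …, x_R} → ℂ satisfy the recursion h(x+1) + i·B·conj(h(x+1)) = h(x) − i·B·conj(h(x)) for a real constant B with |B| ≠ 1, together with the boundary conditions h(x_L) ∈ ℝ·e^{−iπ/4} and h(x_R) ∈ ℝ·e^{iπ/4}. Then h ≡ 0. -/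
open Complex

/-- A function on an integer interval satisfying the recursion
`h(x+1) + i·B·conj(h(x+1)) = h(x) − i·B·conj(h(x))` (with real `B`, `|B| ≠ 1`) and the
Riemann boundary conditions `h(x_L) ∈ ℝ·e^{−iπ/4}`, `h(x_R) ∈ ℝ·e^{iπ/4}` vanishes
identically. -/
theorem recursion_riemann_bc_zero
    (xL xR : ℤ) (hle : xL ≤ xR)
    (B : ℝ) (hB : |B| ≠ 1)
    (h : ℤ → ℂ)
    (hrec : ∀ x : ℤ, xL ≤ x → x < xR →
      h (x + 1) + I * (B : ℂ) * (starRingEnd ℂ) (h (x + 1))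
        = h x - I * (B : ℂ) * (starRingEnd ℂ) (h x))
    (hbcL : ∃ c : ℝ, h xL = (c : ℂ) * Complex.exp (-(Real.pi * I) / 4))
    (hbcR : ∃ c : ℝ, h xR = (c : ℂ) * Complex.exp ((Real.pi * I) / 4)) :
    ∀ x : ℤ, xL ≤ x → x ≤ xR → h x = 0 := by
  have hB1 : (1 : ℝ) + B ≠ 0 := by
    intro hc; apply hB; have : B = -1 := by linarith
    simp [this]
  have hB2 : (1 : ℝ) - B ≠ 0 := by
    intro hc; apply hB; have : B = 1 := by linarith
    simp [this]
  -- real/imaginary part recursions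
  have key : ∀ x : ℤ, xL ≤ x → x < xR →
      (h (x+1)).re + B * (h (x+1)).im = (h x).re - B * (h x).im ∧
      (h (x+1)).im + B * (h (x+1)).re = (h x).im - B * (h x).re := by
    intro x hx hx'
    have e := hrec x hx hx'
    constructor
    · have := congrArg Complex.re e
      simpa [Complex.add_re, Complex.sub_re, Complex.mul_re, Complex.mul_im] using this
    · have := congrArg Complex.im e
      simpa [Complex.add_im, Complex.sub_im, Complex.mul_re, Complex.mul_im] using this
  -- P := u+v vanishes by forward induction
  have hPL : (h xL).re + (h xL).im = 0 := by
    obtain ⟨c, hc⟩ := hbcL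
    have : -(Real.pi * I) / 4 = ((-(Real.pi/4) : ℝ) : ℂ) * I := by
      push_cast; ring
    rw [this] at hc
    have hre : (h xL).re = c * Real.cos (-(Real.pi/4)) := by
      rw [hc]
      simp only [Complex.mul_re, Complex.mul_im, Complex.ofReal_re, Complex.ofReal_im,
        Complex.exp_ofReal_mul_I_re, Complex.exp_ofReal_mul_I_im, zero_mul, sub_zero, add_zero]
    have him : (h xL).im = c * Real.sin (-(Real.pi/4)) := by
      rw [hc]
      simp only [Complex.mul_re, Complex.mul_im, Complex.ofReal_re, Complex.ofReal_im,
        Complex.exp_ofReal_mul_I_re, Complex.exp_ofReal_mul_I_im, zero_mul, sub_zero, add_zero]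
    rw [hre, him, Real.cos_neg, Real.sin_neg, Real.cos_pi_div_four, Real.sin_pi_div_four]
    ring
  have hQR : (h xR).re - (h xR).im = 0 := by
    obtain ⟨c, hc⟩ := hbcR
    have : (Real.pi * I) / 4 = (((Real.pi/4) : ℝ) : ℂ) * I := by
      push_cast; ring
    rw [this] at hc
    have hre : (h xR).re = c * Real.cos (Real.pi/4) := by
      rw [hc]
      simp only [Complex.mul_re, Complex.mul_im, Complex.ofReal_re, Complex.ofReal_im,
        Complex.exp_ofReal_mul_I_re, Complex.exp_ofReal_mul_I_im, zero_mul, sub_zero, add_zero]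
    have him : (h xR).im = c * Real.sin (Real.pi/4) := by
      rw [hc]
      simp only [Complex.mul_re, Complex.mul_im, Complex.ofReal_re, Complex.ofReal_im,
        Complex.exp_ofReal_mul_I_re, Complex.exp_ofReal_mul_I_im, zero_mul, sub_zero, add_zero]
    rw [hre, him, Real.cos_pi_div_four, Real.sin_pi_div_four]
    ring
  have hP : ∀ x : ℤ, xL ≤ x → x ≤ xR → (h x).re + (h x).im = 0 := by
    refine Int.le_induction ?_ ?_
    · intro _; exact hPL
    · intro n hn ih hn1
      have hnR : n < xR := by omega
      have hprev : (h n).re + (h n).im = 0 := ih (by omega)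
      obtain ⟨e1, e2⟩ := key n hn hnR
      have hz : (1 + B) * ((h (n+1)).re + (h (n+1)).im) = 0 := by
        linear_combination e1 + e2 + (1 - B) * hprev
      rcases mul_eq_zero.mp hz with hc | hc
      · exact absurd hc hB1
      · exact hc
  have hQ' : ∀ x : ℤ, x ≤ xR → (xL ≤ x → (h x).re - (h x).im = 0) := by
    refine Int.le_induction_down ?_ ?_
    · intro _; exact hQR
    · intro n hn ih hx
      have hnext : (h n).re - (h n).im = 0 := ih (by omega)
      obtain ⟨e1, e2⟩ := key (n-1) hx (by omega)
      rw [show n - 1 + 1 = n by ring] at e1 e2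
      have hz : (1 + B) * ((h (n-1)).re - (h (n-1)).im) = 0 := by
        linear_combination (1 - B) * hnext - e1 + e2
      rcases mul_eq_zero.mp hz with hc | hc
      · exact absurd hc hB1
      · exact hc
  have hQ : ∀ x : ℤ, xL ≤ x → x ≤ xR → (h x).re - (h x).im = 0 := fun x hx hx' => hQ' x hx' hx
  intro x hx hx'
  have p := hP x hx hx'
  have q := hQ x hx hx'
  apply Complex.ext <;> simp <;> linarith
end
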